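/- arXiv:1602.05151 — 2 statements merged into one kernel-verified Lean document; each statement's English description precedes it below -/
import Mathlib

section
/- For any normed BPA system G = (V, Act, R) and α, γ ∈ V*: if α is a redundancy-free prefix of αγ (i.e. α cannot be written as δXβ with Xβγ ~ βγ), then ‖αγ‖_cc ≥ |α| + ‖γ‖_cc (with the convention n + ω = ω), where ‖·‖_cc is the class-change norm in L_G and |α| is the length of α. -/
/-! Common definitions: labelled transition systems, branching bisimulation,
branching bisimilarity, silent states, class-change norm, BPA systems,
right-to-left finite transducers. -/

/-- A τ-path `t = t₀ →τ t₁ →τ ⋯ →τ t_k` in which every state after `t₀`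
is related to `s` by `B`. -/
inductive TauSeq {S Act : Type} (tr : S → Act → S → Prop) (τ : Act)
    (B : S → S → Prop) (s : S) : S → S → Prop
  | refl (t : S) : TauSeq tr τ B s t t
  | step {t t' t'' : S} : tr t τ t' → B s t' → TauSeq tr τ B s t' t'' →
      TauSeq tr τ B s t t''

/-- `B` is a branching bisimulation in the LTS given by `tr` with silent action `τ`. -/
def IsBranchingBisim {S Act : Type} (tr : S → Act → S → Prop) (τ : Act)
    (B : S → S → Prop) : Prop :=
  ∀ s t, B s t →
    (∀ a s', tr s a s' →
      ((a = τ ∧ B s' t) ∨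
        ∃ tk t', TauSeq tr τ B s t tk ∧ tr tk a t' ∧ B s' t')) ∧
    (∀ a t', tr t a t' →
      ((a = τ ∧ B s t') ∨
        ∃ sk s', TauSeq tr τ (fun u v => B v u) t s sk ∧ tr sk a s' ∧ B s' t'))

/-- Branching bisimilarity: `s ~ t` iff some branching bisimulation contains `(s,t)`. -/
def BBisim {S Act : Type} (tr : S → Act → S → Prop) (τ : Act) (s t : S) : Prop :=
  ∃ B, IsBranchingBisim tr τ B ∧ B s t

/-- `Steps tr s w t`: there is a path from `s` to `t` labelled by the word `w`. -/
inductive Steps {S Act : Type} (tr : S → Act → S → Prop) : S → List Act → S → Prop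
  | refl (s : S) : Steps tr s [] s
  | step {s : S} {a : Act} {s' : S} {w : List Act} {t : S} :
      tr s a s' → Steps tr s' w t → Steps tr s (a :: w) t

/-- A state is silent if only τ-labelled words can be performed from it. -/
def SilentState {S Act : Type} (tr : S → Act → S → Prop) (τ : Act) (s : S) : Prop :=
  ∀ w s', Steps tr s w s' → ∀ a ∈ w, a = τ

/-- A τ-path in which no transition is class-changing (each step stays in the same
`~`-class). -/
inductive TauNC {S Act : Type} (tr : S → Act → S → Prop) (τ : Act) : S → S → Prop
  | refl (t : S) : TauNC tr τ t t
  | step {t t' t'' : S} : tr t τ t' → BBisim tr τ t t' → TauNC tr τ t' t'' →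
      TauNC tr τ t t''

/-- `CCPath tr τ s n t`: there is a path from `s` to `t` containing exactly `n`
class-changing transitions. -/
inductive CCPath {S Act : Type} (tr : S → Act → S → Prop) (τ : Act) : S → ℕ → S → Prop
  | refl (s : S) : CCPath tr τ s 0 s
  | stepEq {s : S} {a : Act} {s' : S} {n : ℕ} {t : S} :
      tr s a s' → BBisim tr τ s s' → CCPath tr τ s' n t → CCPath tr τ s n t
  | stepNe {s : S} {a : Act} {s' : S} {n : ℕ} {t : S} :
      tr s a s' → ¬ BBisim tr τ s s' → CCPath tr τ s' n t → CCPath tr τ s (n + 1) t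

/-- The class-change norm: the least number of class-changing transitions on a path
to a silent state; `⊤` (ω) if no silent state is reachable. -/
noncomputable def ccNorm {S Act : Type} (tr : S → Act → S → Prop) (τ : Act) (s : S) : ℕ∞ :=
  sInf {n : ℕ∞ | ∃ ℓ : ℕ, n = (ℓ : ℕ∞) ∧ ∃ t, CCPath tr τ s ℓ t ∧ SilentState tr τ t}

/-- A BPA system: a finite set of rules `A →a α` (a context-free grammar in
Greibach normal form, no starting variable). -/
structure BPA (V Act : Type) where
  rules : Finset (V × Act × List V)

/-- The transition relation of the LTS `L_G` associated with a BPA system `G`: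
`Aβ →a γβ` whenever `A →a γ` is a rule. -/
def BPA.tr {V Act : Type} (G : BPA V Act) : List V → Act → List V → Prop :=
  fun s a t => ∃ (A : V) (γ β : List V), (A, a, γ) ∈ G.rules ∧ s = A :: β ∧ t = γ ++ β

/-- The (standard, syntactic) norm of a process: the length of a shortest word
leading to the empty process; `⊤` (ω) if there is none. -/
noncomputable def BPA.norm {V Act : Type} (G : BPA V Act) (α : List V) : ℕ∞ :=
  sInf {n : ℕ∞ | ∃ w : List Act, n = (w.length : ℕ∞) ∧ Steps G.tr α w []}

/-- A BPA system is normed if every variable has a finite norm. -/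
def BPA.Normed {V Act : Type} (G : BPA V Act) : Prop :=
  ∀ A : V, G.norm [A] ≠ ⊤

/-- The transition relation of `L_{G,R}`: as `L_G`, but all outgoing transitions of
states in `R*` are removed. -/
def BPA.trR {V Act : Type} (G : BPA V Act) (R : Set V) : List V → Act → List V → Prop :=
  fun s a t => G.tr s a t ∧ ¬ (∀ X ∈ s, X ∈ R)

/-- `R_γ`: the set of variables redundant w.r.t. `γ`, i.e. those `X` with `Xγ ~ γ`. -/
def RedSet {V Act : Type} (G : BPA V Act) (τ : Act) (γ : List V) : Set V :=
  {X : V | BBisim G.tr τ (X :: γ) γ}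

/-- `α` is a redundancy-free prefix of `αγ`: it cannot be written as `δXβ` with
`Xβγ ~ βγ`. -/
def RedFreePrefix {V Act : Type} (G : BPA V Act) (τ : Act) (α γ : List V) : Prop :=
  ¬ ∃ (δ : List V) (X : V) (β : List V),
      α = δ ++ X :: β ∧ BBisim G.tr τ (X :: (β ++ γ)) (β ++ γ)

/-- A finite-state transducer reading (and writing) from right to left. -/
structure Transducer (Q V : Type) where
  delta : Q → V → Q × List V
  q0 : Q

/-- Running the transducer on an input string, right to left:
`T.run α q = (q', β)` means `q' ⇐α|β= q`. -/
def Transducer.run {Q V : Type} (T : Transducer Q V) : List V → Q → Q × List V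
  | [], q => (q, [])
  | A :: α, q =>
      let p := T.run α q
      ((T.delta p.1 A).1, (T.delta p.1 A).2 ++ p.2)

/-- `T_q(α)`: the output of `T` on input `α`, started in state `q`. -/
def Transducer.out {Q V : Type} (T : Transducer Q V) (q : Q) (α : List V) : List V :=
  (T.run α q).2

/-- `q`-normal forms: `ε ∈ NF_q`, and `αA ∈ NF_q` iff `A` is a `q`-prime and
`α` is a `q'`-normal form where `q' ⇐A|A= q`. -/
inductive Transducer.NF {Q V : Type} (T : Transducer Q V) : Q → List V → Prop
  | nil (q : Q) : Transducer.NF T q []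
  | snoc {q : Q} {A : V} {α : List V} :
      (T.delta q A).2 = [A] → Transducer.NF T (T.delta q A).1 α →
      Transducer.NF T q (α ++ [A])

/-- A normal-form-computing (nfc) transducer: each `T_q(A)` is a `q`-normal form,
and `q' ⇐A|γ= q` implies `q' ⇐γ|γ= q`. -/
def Transducer.IsNFC {Q V : Type} (T : Transducer Q V) : Prop :=
  ∀ (q : Q) (A : V),
    Transducer.NF T q (T.delta q A).2 ∧ T.run (T.delta q A).2 q = T.delta q A

/-- A τ-path in `L_G` along which the `T_q`-output stays constant. -/
inductive ConstTauSeq {Q V Act : Type} (tr : List V → Act → List V → Prop) (τ : Act)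
    (T : Transducer Q V) (q : Q) : List V → List V → Prop
  | refl (α : List V) : ConstTauSeq tr τ T q α α
  | step {α α' α'' : List V} : tr α τ α' → T.out q α' = T.out q α →
      ConstTauSeq tr τ T q α' α'' → ConstTauSeq tr τ T q α α''

/-- The long move `α ⇒a_q β`. -/
def BigStep {Q V Act : Type} (G : BPA V Act) (τ : Act) (T : Transducer Q V) (q : Q)
    (α : List V) (a : Act) (β : List V) : Prop :=
  (a = τ ∧ β = T.out q α) ∨
  ∃ αk β', ConstTauSeq G.tr τ T q α αk ∧ G.tr αk a β' ∧ β = T.out q β'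

/-- The equivalence `α₁ ≈_q α₂`: the same long moves are available. -/
def TApprox {Q V Act : Type} (G : BPA V Act) (τ : Act) (T : Transducer Q V) (q : Q)
    (α₁ α₂ : List V) : Prop :=
  ∀ a β, BigStep G τ T q α₁ a β ↔ BigStep G τ T q α₂ a β

/-- Consistency of an nfc-transducer with a BPA system (Definition 4.1). -/
def ConsistentWith {Q V Act : Type} (T : Transducer Q V) (G : BPA V Act) (τ : Act) : Prop :=
  (∀ A : V, T.out T.q0 [A] = [] → TApprox G τ T T.q0 [A] []) ∧
  (∀ (q : Q) (A : V), T.out q [A] ≠ [] → TApprox G τ T q [A] (T.out q [A])) ∧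
  (∀ (q : Q) (A C : V), T.out q [A, C] = [C] → T.out q [C] = [C] →
    TApprox G τ T q [A, C] [C])

/-! Follow a path from `αγ` with `ℓ` class changes to a silent state, and on to `ε` (normedness
lets a silent state reach `ε`, and every step between silent states stays in its class). Popping
the head `A` of `Aβγ` forces the path through `βγ`; if the segment `Aβγ ⇒ βγ` had no class change,
transitivity of `~` would give `Aβγ ~ βγ`, against redundancy-freeness. So each letter of `α`
costs one class change before the path reaches `γ`.

Transitivity of branching bisimilarity is the one nontrivial ingredient; it goes through
Basten's semi-branching bisimulations, which compose, and whose union is a branching bisimulation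
because it is closed under stuttering. -/

section Transitivity

variable {S Act : Type} (tr : S → Act → S → Prop) (τ : Act)

def TauStar : S → S → Prop := Relation.ReflTransGen fun u v => tr u τ v

/-- The transfer condition of a semi-branching bisimulation: unlike in `IsBranchingBisim`, the
intermediate states of the τ-path `t ⇒ th` need not be related to `s`. -/
def SemiMatch (B : S → S → Prop) (s t : S) : Prop :=
  ∀ a s', tr s a s' →
    ∃ th, TauStar tr τ t th ∧ B s th ∧ ((a = τ ∧ B s' th) ∨ ∃ t', tr th a t' ∧ B s' t')

def IsSemiBranchingBisim (B : S → S → Prop) : Prop :=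
  ∀ s t, B s t → SemiMatch tr τ B s t ∧ SemiMatch tr τ (fun u v => B v u) t s

def SemiBBisim (s t : S) : Prop := ∃ B, IsSemiBranchingBisim tr τ B ∧ B s t

variable {tr τ}

theorem SemiMatch.mono {B B' : S → S → Prop} (hBB : ∀ u v, B u v → B' u v) {s t : S}
    (h : SemiMatch tr τ B s t) : SemiMatch tr τ B' s t := by
  intro a s' hstep
  obtain ⟨th, hth, hsth, hmatch⟩ := h a s' hstep
  refine ⟨th, hth, hBB _ _ hsth, hmatch.imp (And.imp_right (hBB _ _)) ?_⟩
  exact fun ⟨t', ht', hs't'⟩ => ⟨t', ht', hBB _ _ hs't'⟩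

theorem TauSeq.tauStar {B : S → S → Prop} {s t t' : S} (h : TauSeq tr τ B s t t') :
    TauStar tr τ t t' ∧ (t' = t ∨ B s t') := by
  induction h with
  | refl t => exact ⟨.refl, .inl rfl⟩
  | step hstep hB _ ih => exact ⟨.head hstep ih.1, .inr (ih.2.elim (· ▸ hB) id)⟩

theorem TauSeq.mono {B B' : S → S → Prop} {s t t' : S} (h : TauSeq tr τ B s t t')
    (hBB : ∀ u, B s u → B' s u) : TauSeq tr τ B' s t t' := by
  induction h with
  | refl t => exact .refl t
  | step hstep hB _ ih => exact .step hstep (hBB _ hB) ih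

theorem semiMatch_of_branching {B : S → S → Prop} {s t : S}
    (h : ∀ a s', tr s a s' →
      (a = τ ∧ B s' t) ∨ ∃ tk t', TauSeq tr τ B s t tk ∧ tr tk a t' ∧ B s' t')
    (hst : B s t) : SemiMatch tr τ B s t := by
  intro a s' hstep
  rcases h a s' hstep with hτ | ⟨tk, t', hseq, htk, ht'⟩
  · exact ⟨t, .refl, hst, .inl hτ⟩
  · obtain ⟨hstar, htk_eq | hsk⟩ := hseq.tauStar
    · exact ⟨tk, hstar, htk_eq ▸ hst, .inr ⟨t', htk, ht'⟩⟩
    · exact ⟨tk, hstar, hsk, .inr ⟨t', htk, ht'⟩⟩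

theorem IsBranchingBisim.isSemiBranchingBisim {B : S → S → Prop}
    (h : IsBranchingBisim tr τ B) : IsSemiBranchingBisim tr τ B :=
  fun s t hst => ⟨semiMatch_of_branching (h s t hst).1 hst,
    semiMatch_of_branching (B := fun u v => B v u) (h s t hst).2 hst⟩

theorem isSemiBranchingBisim_semiBBisim : IsSemiBranchingBisim tr τ (SemiBBisim tr τ) :=
  fun s t ⟨B, hB, hst⟩ =>
    ⟨(hB s t hst).1.mono fun _ _ h => ⟨B, hB, h⟩, (hB s t hst).2.mono fun _ _ h => ⟨B, hB, h⟩⟩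

theorem SemiBBisim.symm {s t : S} (h : SemiBBisim tr τ s t) : SemiBBisim tr τ t s :=
  let ⟨B, hB, hst⟩ := h
  ⟨fun u v => B v u, fun u v huv => ⟨(hB v u huv).2, (hB v u huv).1⟩, hst⟩

theorem exists_tauStar_of_semiMatch {B : S → S → Prop} (hB : ∀ s t, B s t → SemiMatch tr τ B s t)
    {u u' : S} (hu : TauStar tr τ u u') {t : S} (hut : B u t) :
    ∃ t', TauStar tr τ t t' ∧ B u' t' := by
  induction hu using Relation.ReflTransGen.head_induction_on generalizing t with
  | refl => exact ⟨t, .refl, hut⟩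
  | head hstep _ ih =>
    obtain ⟨th, hth, -, hmatch⟩ := hB _ _ hut _ _ hstep
    rcases hmatch with ⟨-, hB'⟩ | ⟨t'', ht'', hB'⟩
    · obtain ⟨t', ht', hB''⟩ := ih hB'
      exact ⟨t', hth.trans ht', hB''⟩
    · obtain ⟨t', ht', hB''⟩ := ih hB'
      exact ⟨t', (hth.tail ht'').trans ht', hB''⟩

theorem SemiMatch.comp {B₁ B₂ : S → S → Prop} (h₁ : ∀ s t, B₁ s t → SemiMatch tr τ B₁ s t)
    (h₂ : ∀ s t, B₂ s t → SemiMatch tr τ B₂ s t) {s t : S} (hst : Relation.Comp B₁ B₂ s t) :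
    SemiMatch tr τ (Relation.Comp B₁ B₂) s t := by
  obtain ⟨u, hsu, hut⟩ := hst
  intro a s' hstep
  obtain ⟨uh, huh, hsuh, hmatch⟩ := h₁ s u hsu a s' hstep
  obtain ⟨t₁, ht₁, huht₁⟩ := exists_tauStar_of_semiMatch h₂ huh hut
  rcases hmatch with ⟨hτ, hs'uh⟩ | ⟨u', huh', hs'u'⟩
  · exact ⟨t₁, ht₁, ⟨uh, hsuh, huht₁⟩, .inl ⟨hτ, uh, hs'uh, huht₁⟩⟩
  · obtain ⟨th, hth, huhth, hmatch'⟩ := h₂ _ _ huht₁ a u' huh'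
    refine ⟨th, ht₁.trans hth, ⟨uh, hsuh, huhth⟩, ?_⟩
    rcases hmatch' with ⟨hτ, hu'th⟩ | ⟨t', ht', hu't'⟩
    · exact .inl ⟨hτ, u', hs'u', hu'th⟩
    · exact .inr ⟨t', ht', u', hs'u', hu't'⟩

theorem IsSemiBranchingBisim.comp {B₁ B₂ : S → S → Prop} (h₁ : IsSemiBranchingBisim tr τ B₁)
    (h₂ : IsSemiBranchingBisim tr τ B₂) : IsSemiBranchingBisim tr τ (Relation.Comp B₁ B₂) := by
  refine fun s t hst => ⟨SemiMatch.comp (fun s t h => (h₁ s t h).1) (fun s t h => (h₂ s t h).1) hst,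
    ?_⟩
  obtain ⟨u, hsu, hut⟩ := hst
  exact (SemiMatch.comp (fun s t h => (h₂ t s h).2) (fun s t h => (h₁ t s h).2) ⟨u, hut, hsu⟩).mono
    fun _ _ ⟨w, h₂w, h₁w⟩ => ⟨w, h₁w, h₂w⟩

theorem SemiBBisim.stutter {s t₀ t t₂ : S} (h₀ : SemiBBisim tr τ s t₀)
    (ht₀ : TauStar tr τ t₀ t) (ht : TauStar tr τ t t₂) (h₂ : SemiBBisim tr τ s t₂) :
    SemiBBisim tr τ s t := by
  have hM := isSemiBranchingBisim_semiBBisim (tr := tr) (τ := τ)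
  refine ⟨fun x y => SemiBBisim tr τ x y ∨ ∃ y₀ y₂, TauStar tr τ y₀ y ∧ TauStar tr τ y y₂ ∧
      SemiBBisim tr τ x y₀ ∧ SemiBBisim tr τ x y₂, ?_, .inr ⟨t₀, t₂, ht₀, ht, h₀, h₂⟩⟩
  rintro x y (hxy | ⟨y₀, y₂, hy₀, hy, hxy₀, hxy₂⟩)
  · exact ⟨(hM x y hxy).1.mono fun _ _ => .inl, (hM x y hxy).2.mono fun _ _ => .inl⟩
  constructor
  · -- `x` is matched from `y` by following `y ⇒ y₂` first.
    intro a x' hstep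
    obtain ⟨yh, hyh, hxyh, hmatch⟩ := (hM x y₂ hxy₂).1 a x' hstep
    refine ⟨yh, hy.trans hyh, .inl hxyh, ?_⟩
    rcases hmatch with ⟨hτ, h'⟩ | ⟨y', hy', h'⟩
    · exact .inl ⟨hτ, .inl h'⟩
    · exact .inr ⟨y', hy', .inl h'⟩
  · -- `y` is matched from `x` after `x` has followed `y₀ ⇒ y`.
    intro a y' hstep
    obtain ⟨x₁, hx₁, hx₁y⟩ :=
      exists_tauStar_of_semiMatch (B := fun u v => SemiBBisim tr τ v u)
        (fun s t h => (hM t s h).2) hy₀ hxy₀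
    obtain ⟨xh, hxh, hxhy, hmatch⟩ := (hM x₁ y hx₁y).2 a y' hstep
    refine ⟨xh, hx₁.trans hxh, .inl hxhy, ?_⟩
    rcases hmatch with ⟨hτ, h'⟩ | ⟨x', hx', h'⟩
    · exact .inl ⟨hτ, .inl h'⟩
    · exact .inr ⟨x', hx', .inl h'⟩

theorem SemiBBisim.tauSeq {s t t' : S} (hst : SemiBBisim tr τ s t) (ht : TauStar tr τ t t')
    (hst' : SemiBBisim tr τ s t') : TauSeq tr τ (SemiBBisim tr τ) s t t' := by
  induction ht using Relation.ReflTransGen.head_induction_on with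
  | refl => exact .refl t'
  | head hstep ht' ih =>
    have hsu := hst.stutter (.single hstep) ht' hst'
    exact .step hstep hsu (ih hsu)

theorem SemiBBisim.branchingMatch {s t : S} (h : SemiBBisim tr τ s t) :
    ∀ a s', tr s a s' → (a = τ ∧ SemiBBisim tr τ s' t) ∨
      ∃ tk t', TauSeq tr τ (SemiBBisim tr τ) s t tk ∧ tr tk a t' ∧ SemiBBisim tr τ s' t' := by
  intro a s' hstep
  obtain ⟨th, hth, hsth, hmatch⟩ := (isSemiBranchingBisim_semiBBisim s t h).1 a s' hstep
  rcases hmatch with ⟨hτ, hs'th⟩ | ⟨t', ht', hs't'⟩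
  · -- a τ-move matched by `t ⇒ th`: its last τ-step becomes the matching step
    rcases Relation.ReflTransGen.cases_tail hth with rfl | ⟨c, hc, hcth⟩
    · exact .inl ⟨hτ, hs'th⟩
    · have hsc := h.stutter hc (.single hcth) hsth
      exact .inr ⟨c, th, h.tauSeq hc hsc, hτ ▸ hcth, hs'th⟩
  · exact .inr ⟨th, t', h.tauSeq hth hsth, ht', hs't'⟩

theorem isBranchingBisim_semiBBisim : IsBranchingBisim tr τ (SemiBBisim tr τ) := by
  refine fun s t h => ⟨h.branchingMatch, fun a t' hstep => ?_⟩
  rcases h.symm.branchingMatch a t' hstep with ⟨hτ, h'⟩ | ⟨sk, s', hseq, hsk, h'⟩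
  · exact .inl ⟨hτ, h'.symm⟩
  · exact .inr ⟨sk, s', hseq.mono fun _ => SemiBBisim.symm, hsk, h'.symm⟩

theorem bbisim_iff_semiBBisim {s t : S} : BBisim tr τ s t ↔ SemiBBisim tr τ s t :=
  ⟨fun ⟨B, hB, h⟩ => ⟨B, hB.isSemiBranchingBisim, h⟩,
    fun h => ⟨SemiBBisim tr τ, isBranchingBisim_semiBBisim, h⟩⟩

theorem BBisim.refl (s : S) : BBisim tr τ s s :=
  ⟨Eq, fun _ _ hst => hst ▸ ⟨fun _ s' h => .inr ⟨_, s', .refl _, h, rfl⟩,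
    fun _ t' h => .inr ⟨_, t', .refl _, h, rfl⟩⟩, rfl⟩

theorem BBisim.trans {s t u : S} (hst : BBisim tr τ s t) (htu : BBisim tr τ t u) :
    BBisim tr τ s u :=
  let ⟨B₁, hB₁, h₁⟩ := hst
  let ⟨B₂, hB₂, h₂⟩ := htu
  bbisim_iff_semiBBisim.2 ⟨Relation.Comp B₁ B₂,
    hB₁.isSemiBranchingBisim.comp hB₂.isSemiBranchingBisim, t, h₁, h₂⟩

end Transitivity

section ClassChangePaths

variable {S Act : Type} {tr : S → Act → S → Prop} {τ : Act}

theorem Steps.append {s t u : S} {w v : List Act} (h₁ : Steps tr s w t) (h₂ : Steps tr t v u) :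
    Steps tr s (w ++ v) u := by
  induction h₁ with
  | refl => exact h₂
  | step hstep _ ih => exact .step hstep (ih h₂)

theorem CCPath.append {s t u : S} {m n : ℕ} (h₁ : CCPath tr τ s m t) (h₂ : CCPath tr τ t n u) :
    CCPath tr τ s (m + n) u := by
  induction h₁ with
  | refl => simpa using h₂
  | stepEq hstep hbb _ ih => exact .stepEq hstep hbb (ih h₂)
  | stepNe hstep hbb _ ih => exact Nat.add_right_comm .. ▸ .stepNe hstep hbb (ih h₂)

theorem CCPath.bbisim_of_zero {s t : S} (h : CCPath tr τ s 0 t) : BBisim tr τ s t := by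
  generalize hℓ : 0 = ℓ at h
  induction h with
  | refl => exact .refl _
  | stepEq _ hbb _ ih => exact hbb.trans (ih hℓ)
  | stepNe => omega

theorem ccNorm_le_of_ccPath {s t : S} {ℓ : ℕ} (h : CCPath tr τ s ℓ t) (ht : SilentState tr τ t) :
    ccNorm tr τ s ≤ ℓ :=
  sInf_le ⟨ℓ, rfl, t, h, ht⟩

theorem SilentState.of_step {s s' : S} {a : Act} (hs : SilentState tr τ s) (h : tr s a s') :
    a = τ ∧ SilentState tr τ s' :=
  ⟨hs [a] s' (.step h (.refl s')) a (List.mem_singleton_self a),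
    fun w t hw b hb => hs (a :: w) t (.step h hw) b (List.mem_cons_of_mem a hb)⟩

theorem SilentState.bbisim {s t : S} (hs : SilentState tr τ s) (ht : SilentState tr τ t) :
    BBisim tr τ s t := by
  refine ⟨fun u v => SilentState tr τ u ∧ SilentState tr τ v, ?_, hs, ht⟩
  rintro u v ⟨hu, hv⟩
  exact ⟨fun a u' h => .inl ⟨(hu.of_step h).1, (hu.of_step h).2, hv⟩,
    fun a v' h => .inl ⟨(hv.of_step h).1, hu, (hv.of_step h).2⟩⟩

theorem SilentState.ccPath_zero {s u : S} {w : List Act} (hs : SilentState tr τ s)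
    (hw : Steps tr s w u) : CCPath tr τ s 0 u := by
  induction hw with
  | refl => exact .refl _
  | step hstep _ ih =>
    have hs' := (hs.of_step hstep).2
    exact .stepEq hstep (hs.bbisim hs') (ih hs')

end ClassChangePaths

section Descent

variable {V Act : Type} {G : BPA V Act} {τ : Act}

theorem BPA.tr_cons {A : V} {β s : List V} {a : Act} (h : G.tr (A :: β) a s) :
    ∃ ξ, s = ξ ++ β := by
  obtain ⟨_, ξ, _, -, hA, rfl⟩ := h
  exact ⟨ξ, by simp_all⟩

theorem BPA.tr_append_right {s t : List V} {a : Act} (h : G.tr s a t) (ρ : List V) :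
    G.tr (s ++ ρ) a (t ++ ρ) := by
  obtain ⟨A, ξ, β, hr, rfl, rfl⟩ := h
  exact ⟨A, ξ, β ++ ρ, hr, rfl, by simp⟩

theorem BPA.steps_append_right {s t : List V} {w : List Act} (h : Steps G.tr s w t) (ρ : List V) :
    Steps G.tr (s ++ ρ) w (t ++ ρ) := by
  induction h with
  | refl => exact .refl _
  | step hstep _ ih => exact .step (BPA.tr_append_right hstep ρ) ih

theorem BPA.not_tr_nil {a : Act} {t : List V} : ¬ G.tr [] a t :=
  fun ⟨_, _, _, _, h, _⟩ => List.cons_ne_nil _ _ h.symm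

theorem BPA.silentState_nil : SilentState G.tr τ ([] : List V) := by
  rintro _ _ (_ | ⟨hstep, _⟩) a ha
  · exact absurd ha List.not_mem_nil
  · exact (BPA.not_tr_nil hstep).elim

theorem BPA.exists_steps_nil_of_norm_ne_top {α : List V} (h : G.norm α ≠ ⊤) :
    ∃ w, Steps G.tr α w [] := by
  by_contra! hα
  exact h (sInf_eq_top.2 fun _ ⟨w, _, hw⟩ => (hα w hw).elim)

theorem BPA.Normed.exists_steps_nil (hG : G.Normed) (α : List V) : ∃ w, Steps G.tr α w [] := by
  induction α with
  | nil => exact ⟨[], .refl _⟩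
  | cons A β ih =>
    obtain ⟨w₁, hA⟩ := BPA.exists_steps_nil_of_norm_ne_top (hG A)
    obtain ⟨w₂, hβ⟩ := ih
    exact ⟨w₁ ++ w₂, (BPA.steps_append_right hA β).append hβ⟩

theorem BPA.ccPath_nil_split {η ρ : List V} {ℓ : ℕ} (h : CCPath G.tr τ (η ++ ρ) ℓ []) :
    ∃ m n, CCPath G.tr τ (η ++ ρ) m ρ ∧ CCPath G.tr τ ρ n [] ∧ m + n = ℓ := by
  suffices ∀ {s t ℓ}, CCPath G.tr τ s ℓ t → t = [] → ∀ η, s = η ++ ρ →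
      ∃ m n, CCPath G.tr τ s m ρ ∧ CCPath G.tr τ ρ n [] ∧ m + n = ℓ from this h rfl η rfl
  intro s t ℓ h
  induction h with
  | refl s =>
    rintro rfl η hs
    obtain ⟨-, rfl⟩ := List.append_eq_nil_iff.1 hs.symm
    exact ⟨0, 0, .refl _, .refl _, rfl⟩
  | stepEq hstep hbb hpath ih =>
    rintro rfl (_ | ⟨A, η⟩) rfl
    · exact ⟨0, _, .refl _, .stepEq hstep hbb hpath, Nat.zero_add _⟩
    · obtain ⟨ξ, rfl⟩ := BPA.tr_cons hstep
      obtain ⟨m, n, hm, hn, rfl⟩ := ih rfl (ξ ++ η) (List.append_assoc ..).symm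
      exact ⟨m, n, .stepEq hstep hbb hm, hn, rfl⟩
  | stepNe hstep hbb hpath ih =>
    rintro rfl (_ | ⟨A, η⟩) rfl
    · exact ⟨0, _, .refl _, .stepNe hstep hbb hpath, Nat.zero_add _⟩
    · obtain ⟨ξ, rfl⟩ := BPA.tr_cons hstep
      obtain ⟨m, n, hm, hn, rfl⟩ := ih rfl (ξ ++ η) (List.append_assoc ..).symm
      exact ⟨m + 1, n, .stepNe hstep hbb hm, hn, Nat.add_right_comm ..⟩

theorem BPA.ccPath_nil_of_not_bbisim_cons {A : V} {ρ : List V} {ℓ : ℕ}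
    (h : CCPath G.tr τ (A :: ρ) ℓ []) (hA : ¬ BBisim G.tr τ (A :: ρ) ρ) :
    ∃ n < ℓ, CCPath G.tr τ ρ n [] := by
  obtain ⟨m, n, hm, hn, rfl⟩ := BPA.ccPath_nil_split (η := [A]) h
  rcases m with _ | m
  · exact (hA hm.bbisim_of_zero).elim
  · exact ⟨n, by omega, hn⟩

theorem RedFreePrefix.not_bbisim_head {A : V} {β γ : List V} (h : RedFreePrefix G τ (A :: β) γ) :
    ¬ BBisim G.tr τ (A :: (β ++ γ)) (β ++ γ) :=
  fun hbb => h ⟨[], A, β, rfl, hbb⟩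

theorem RedFreePrefix.tail {A : V} {β γ : List V} (h : RedFreePrefix G τ (A :: β) γ) :
    RedFreePrefix G τ β γ :=
  fun ⟨δ, X, β', hβ, hbb⟩ => h ⟨A :: δ, X, β', by simp [hβ], hbb⟩

theorem RedFreePrefix.exists_ccPath_nil {α γ : List V} (h : RedFreePrefix G τ α γ) {ℓ : ℕ}
    (hα : CCPath G.tr τ (α ++ γ) ℓ []) : ∃ n, CCPath G.tr τ γ n [] ∧ α.length + n ≤ ℓ := by
  induction α generalizing ℓ with
  | nil => exact ⟨ℓ, hα, by simp⟩
  | cons A β ih =>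
    obtain ⟨k, hk, hβ⟩ := BPA.ccPath_nil_of_not_bbisim_cons hα h.not_bbisim_head
    obtain ⟨n, hn, hle⟩ := ih h.tail hβ
    exact ⟨n, hn, by simp only [List.length_cons]; omega⟩

end Descent

/-- if `α` is a redundancy-free prefix of `αγ`, then
`‖αγ‖_cc ≥ |α| + ‖γ‖_cc` (with `n + ω = ω`). -/
theorem ccNorm_ge_length_of_redFree {V Act : Type} (G : BPA V Act) (τ : Act)
    (hG : G.Normed) (α γ : List V) (h : RedFreePrefix G τ α γ) :
    (α.length : ℕ∞) + ccNorm G.tr τ γ ≤ ccNorm G.tr τ (α ++ γ) := by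
  refine le_sInf ?_
  rintro _ ⟨ℓ, rfl, t, hpath, ht⟩
  obtain ⟨w, hw⟩ := hG.exists_steps_nil t
  obtain ⟨n, hn, hle⟩ := h.exists_ccPath_nil (hpath.append (ht.ccPath_zero hw))
  calc (α.length : ℕ∞) + ccNorm G.tr τ γ
      ≤ α.length + n := by gcongr; exact ccNorm_le_of_ccPath hn BPA.silentState_nil
    _ ≤ ℓ := by exact_mod_cast hle
end

section
/- For any normed BPA system G = (V, Act, R) and all α, β ∈ V*: ‖αβ‖_cc ≥ ‖β‖_cc, where ‖·‖_cc is the class-change norm in L_G (with values in ℕ ∪ {ω}). -/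
lemma steps_trans {S Act : Type} {tr : S → Act → S → Prop} {s m t : S} {w w' : List Act}
    (h1 : Steps tr s w m) (h2 : Steps tr m w' t) : Steps tr s (w ++ w') t := by
  induction h1 with
  | refl => simpa
  | step h _ ih => exact Steps.step h (ih h2)

lemma tr_context {V Act : Type} {G : BPA V Act} {s s' : List V} {a : Act}
    (h : G.tr s a s') (β : List V) : G.tr (s ++ β) a (s' ++ β) := by
  obtain ⟨A, γ, δ, hr, hs, hs'⟩ := h
  exact ⟨A, γ, δ ++ β, hr, by simp [hs], by simp [hs']⟩

lemma steps_context {V Act : Type} {G : BPA V Act} {s s' : List V} {w : List Act}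
    (h : Steps G.tr s w s') (β : List V) : Steps G.tr (s ++ β) w (s' ++ β) := by
  induction h with
  | refl => exact Steps.refl _
  | step h _ ih => exact Steps.step (tr_context h β) ih

lemma norm_finite_steps {V Act : Type} {G : BPA V Act} {A : V}
    (h : G.norm [A] ≠ ⊤) : ∃ w, Steps G.tr [A] w [] := by
  by_contra hc
  push_neg at hc
  apply h
  unfold BPA.norm
  rw [sInf_eq_top]
  rintro n ⟨w, _, hw⟩
  exact absurd hw (hc w)

lemma normed_steps_to_suffix {V Act : Type} {G : BPA V Act} (hG : G.Normed)
    (γ β : List V) : ∃ w, Steps G.tr (γ ++ β) w β := by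
  induction γ with
  | nil => exact ⟨[], Steps.refl _⟩
  | cons A γ' ih =>
    obtain ⟨w, hw⟩ := norm_finite_steps (hG A)
    obtain ⟨w', hw'⟩ := ih
    have h1 : Steps G.tr ([A] ++ (γ' ++ β)) w ([] ++ (γ' ++ β)) :=
      steps_context hw (γ' ++ β)
    simp only [List.singleton_append, List.nil_append] at h1
    exact ⟨w ++ w', steps_trans h1 hw'⟩

lemma silent_of_steps {S Act : Type} {tr : S → Act → S → Prop} {τ : Act} {s u : S}
    {w : List Act} (hs : SilentState tr τ s) (h : Steps tr s w u) :
    SilentState tr τ u := by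
  intro w' u' h' a ha
  exact hs (w ++ w') u' (steps_trans h h') a (by simp [ha])

lemma ccpath_decomp {V Act : Type} {G : BPA V Act} {τ : Act} {s β : List V}
    {ℓ : ℕ} {t : List V} (h : CCPath G.tr τ s ℓ t) :
    ∀ γ : List V, s = γ ++ β →
      (∃ ℓ' ≤ ℓ, CCPath G.tr τ β ℓ' t) ∨ (∃ δ, t = δ ++ β) := by
  induction h with
  | refl s => exact fun γ hγ => Or.inr ⟨γ, hγ⟩
  | @stepEq s a s' n t h hb hp ih =>
    intro γ hγ
    cases γ with
    | nil =>
      rw [List.nil_append] at hγ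
      subst hγ
      exact Or.inl ⟨n, le_refl _, CCPath.stepEq h hb hp⟩
    | cons A γ' =>
      obtain ⟨A', γ₀, δ, hr, hs, hs'⟩ := h
      rw [hγ] at hs
      simp only [List.cons_append, List.cons.injEq] at hs
      obtain ⟨rfl, rfl⟩ := hs
      exact ih (γ₀ ++ γ') (by simp [hs'])
  | @stepNe s a s' n t h hb hp ih =>
    intro γ hγ
    cases γ with
    | nil =>
      rw [List.nil_append] at hγ
      subst hγ
      exact Or.inl ⟨n + 1, le_refl _, CCPath.stepNe h hb hp⟩
    | cons A γ' =>
      obtain ⟨A', γ₀, δ, hr, hs, hs'⟩ := h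
      rw [hγ] at hs
      simp only [List.cons_append, List.cons.injEq] at hs
      obtain ⟨rfl, rfl⟩ := hs
      rcases ih (γ₀ ++ γ') (by simp [hs']) with ⟨ℓ', hle, hpath⟩ | hr'
      · exact Or.inl ⟨ℓ', le_trans hle (Nat.le_succ n), hpath⟩
      · exact Or.inr hr'

lemma ccNorm_le_of_path {S Act : Type} {tr : S → Act → S → Prop} {τ : Act} {s t : S}
    {ℓ : ℕ} (h : CCPath tr τ s ℓ t) (ht : SilentState tr τ t) :
    ccNorm tr τ s ≤ (ℓ : ℕ∞) :=
  sInf_le ⟨ℓ, rfl, t, h, ht⟩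

/-- `‖αβ‖_cc ≥ ‖β‖_cc` in a normed BPA system. -/
theorem ccNorm_suffix_le {V Act : Type} (G : BPA V Act) (τ : Act)
    (hG : G.Normed) (α β : List V) :
    ccNorm G.tr τ β ≤ ccNorm G.tr τ (α ++ β) := by
  apply le_sInf
  rintro n ⟨ℓ, rfl, t, hpath, hsil⟩
  rcases ccpath_decomp hpath α rfl with ⟨ℓ', hle, hpath'⟩ | ⟨δ, rfl⟩
  · exact le_trans (ccNorm_le_of_path hpath' hsil) (by exact_mod_cast hle)
  · obtain ⟨w, hw⟩ := normed_steps_to_suffix hG δ β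
    have hβ : SilentState G.tr τ β := silent_of_steps hsil hw
    exact le_trans (ccNorm_le_of_path (CCPath.refl β) hβ) (by simp)
end
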